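/- For every integer n ≥ 1, the critical white-noise visibility satisfies lim_{ω→0⁺} (pSep(ω,n) − 2^{−n}) / (pEnt(ω,n) − 2^{−n}) = √(n/(2^n − 1)). In particular the noise threshold for the entanglement advantage at low energies decays exponentially to zero as the number of parties n grows. -/

import Mathlib

/-- Maximal success probability of entangled preparations:
`pEnt(ω,n) = 2^{−n}(√((2^n−1)ω) + √(1−ω))²`. -/
noncomputable def pEnt (ω : ℝ) (n : ℕ) : ℝ :=
  (1 / (2 : ℝ) ^ n) * (Real.sqrt (((2 : ℝ) ^ n - 1) * ω) + Real.sqrt (1 - ω)) ^ 2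

/-- Maximal success probability of fully separable preparations:
`pSep(ω,n) = (1/2 + √((1−ω)^{1/n})√(1−(1−ω)^{1/n}))^n`. -/
noncomputable def pSep (ω : ℝ) (n : ℕ) : ℝ :=
  (1 / 2 + Real.sqrt ((1 - ω) ^ ((n : ℝ)⁻¹)) *
    Real.sqrt (1 - (1 - ω) ^ ((n : ℝ)⁻¹))) ^ n

/-!
Both excess probabilities vanish like `√ω` as `ω → 0⁺`, and the critical visibility is the ratio
of the two slopes. Writing `u = (1 - ω)^{1/n}`, `pSep - 2⁻ⁿ = (1/2 + a)ⁿ - (1/2)ⁿ` with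
`a = √u √(1 - u)`; since `1 - u ≈ ω / n`, we get `a / √ω → 1 / √n` and the excess divided by `√ω`
tends to `n 2^{1-n} / √n = 2 √n / 2ⁿ`. Expanding the square,
`pEnt - 2⁻ⁿ = 2⁻ⁿ ((2ⁿ - 2) ω + 2 √(2ⁿ - 1) √ω √(1 - ω))`, whose quotient by `√ω` tends to
`2 √(2ⁿ - 1) / 2ⁿ`.
-/

open Filter Topology

lemma tendsto_pow_sub_pow_div {α : Type*} {l : Filter α} {f g : α → ℝ} {c L : ℝ} (n : ℕ)
    (hf : Tendsto f l (𝓝 c)) (hfg : Tendsto (fun x => (f x - c) / g x) l (𝓝 L)) :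
    Tendsto (fun x => (f x ^ n - c ^ n) / g x) l (𝓝 (n * c ^ (n - 1) * L)) := by
  have hsum : Tendsto (fun x => ∑ i ∈ Finset.range n, f x ^ i * c ^ (n - 1 - i)) l
      (𝓝 (n * c ^ (n - 1))) := by
    have hc : Continuous fun y : ℝ => ∑ i ∈ Finset.range n, y ^ i * c ^ (n - 1 - i) := by
      fun_prop
    simpa only [geom_sum₂_self, Function.comp_def] using hc.continuousAt.tendsto.comp hf
  refine (hsum.mul hfg).congr fun x => ?_
  rw [← mul_div_assoc, geom_sum₂_mul]

lemma tendsto_one_sub_one_sub_rpow_div (p : ℝ) :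
    Tendsto (fun ω : ℝ => (1 - (1 - ω) ^ p) / ω) (𝓝[≠] 0) (𝓝 p) := by
  have hderiv : HasDerivAt (fun ω : ℝ => 1 - (1 - ω) ^ p) p 0 := by
    have h := ((Real.hasDerivAt_rpow_const (x := 1 - 0) (p := p) (by norm_num)).comp (0 : ℝ)
      ((hasDerivAt_id (0 : ℝ)).const_sub 1)).const_sub 1
    simpa using h
  refine (hasDerivAt_iff_tendsto_slope.mp hderiv).congr fun ω => ?_
  simp [slope_def_field]

lemma tendsto_sqrt_rpow_mul_sqrt_one_sub_rpow_div_sqrt (p : ℝ) :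
    Tendsto (fun ω : ℝ => √((1 - ω) ^ p) * √(1 - (1 - ω) ^ p) / √ω) (𝓝[>] 0) (𝓝 √p) := by
  have hbase : Tendsto (fun ω : ℝ => √((1 - ω) ^ p)) (𝓝[>] 0) (𝓝 1) := by
    have hc : ContinuousAt (fun ω : ℝ => √((1 - ω) ^ p)) 0 :=
      Real.continuous_sqrt.continuousAt.comp
        ((Real.continuousAt_rpow_const _ _ (Or.inl (by norm_num))).comp (by fun_prop))
    simpa using hc.tendsto.mono_left nhdsWithin_le_nhds
  have hslope := ((tendsto_one_sub_one_sub_rpow_div p).mono_left (nhdsGT_le_nhdsNE 0)).sqrt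
  refine (one_mul √p ▸ hbase.mul hslope).congr' ?_
  filter_upwards [self_mem_nhdsWithin] with ω hω
  rw [Real.sqrt_div' _ (le_of_lt hω), mul_div_assoc]

lemma tendsto_pSep_sub_div_sqrt (n : ℕ) :
    Tendsto (fun ω : ℝ => (pSep ω n - 1 / 2 ^ n) / √ω) (𝓝[>] 0)
      (𝓝 (n * (1 / 2) ^ (n - 1) * √(n : ℝ)⁻¹)) := by
  have hamp := tendsto_sqrt_rpow_mul_sqrt_one_sub_rpow_div_sqrt (n : ℝ)⁻¹
  have hbase : Tendsto (fun ω : ℝ => 1 / 2 + √((1 - ω) ^ (n : ℝ)⁻¹) *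
      √(1 - (1 - ω) ^ (n : ℝ)⁻¹)) (𝓝[>] 0) (𝓝 (1 / 2)) := by
    have hc : ContinuousAt (fun ω : ℝ => 1 / 2 + √((1 - ω) ^ (n : ℝ)⁻¹) *
        √(1 - (1 - ω) ^ (n : ℝ)⁻¹)) 0 := by
      have hrpow : ContinuousAt (fun ω : ℝ => (1 - ω) ^ (n : ℝ)⁻¹) 0 :=
        (Real.continuousAt_rpow_const _ _ (Or.inl (by norm_num))).comp (by fun_prop)
      exact continuousAt_const.add ((Real.continuous_sqrt.continuousAt.comp hrpow).mul
        (Real.continuous_sqrt.continuousAt.comp (continuousAt_const.sub hrpow)))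
    simpa using hc.tendsto.mono_left nhdsWithin_le_nhds
  have h := tendsto_pow_sub_pow_div n hbase (by simpa using hamp)
  simpa [pSep, one_div_pow] using h

lemma tendsto_sq_sqrt_mul_add_sqrt_one_sub_sub_one_div_sqrt {d : ℝ} (hd : 0 ≤ d) :
    Tendsto (fun ω : ℝ => ((√(d * ω) + √(1 - ω)) ^ 2 - 1) / √ω) (𝓝[>] 0) (𝓝 (2 * √d)) := by
  have hlin : Tendsto (fun ω : ℝ => (d - 1) * √ω + 2 * √d * √(1 - ω)) (𝓝[>] 0)
      (𝓝 (2 * √d)) := by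
    have hc : Continuous fun ω : ℝ => (d - 1) * √ω + 2 * √d * √(1 - ω) := by fun_prop
    simpa using (hc.tendsto 0).mono_left nhdsWithin_le_nhds
  refine hlin.congr' ?_
  filter_upwards [Ioo_mem_nhdsGT one_pos] with ω ⟨hω0, hω1⟩
  have hsqrt : √ω ≠ 0 := (Real.sqrt_pos.mpr hω0).ne'
  rw [eq_div_iff hsqrt, add_sq, Real.sqrt_mul hd, mul_pow, Real.sq_sqrt hd,
    Real.sq_sqrt hω0.le, Real.sq_sqrt (by linarith)]
  linear_combination (d - 1) * Real.mul_self_sqrt hω0.le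

lemma tendsto_pEnt_sub_div_sqrt (n : ℕ) :
    Tendsto (fun ω : ℝ => (pEnt ω n - 1 / 2 ^ n) / √ω) (𝓝[>] 0)
      (𝓝 (1 / 2 ^ n * (2 * √(2 ^ n - 1)))) := by
  have h := (tendsto_sq_sqrt_mul_add_sqrt_one_sub_sub_one_div_sqrt
    (sub_nonneg.mpr (one_le_pow₀ (by norm_num : (1 : ℝ) ≤ 2)) : (0 : ℝ) ≤ 2 ^ n - 1)).const_mul
    (1 / 2 ^ n)
  refine h.congr fun ω => ?_
  rw [pEnt]
  ring

theorem critical_visibility_low_energy_limit (n : ℕ) (hn : 1 ≤ n) :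
    Filter.Tendsto
      (fun ω : ℝ => (pSep ω n - 1 / (2 : ℝ) ^ n) / (pEnt ω n - 1 / (2 : ℝ) ^ n))
      (nhdsWithin 0 (Set.Ioi 0))
      (nhds (Real.sqrt ((n : ℝ) / ((2 : ℝ) ^ n - 1)))) := by
  have hpow : (2 : ℝ) ≤ 2 ^ n := by simpa using pow_le_pow_right₀ (by norm_num : (1 : ℝ) ≤ 2) hn
  have hden : 0 < 1 / (2 : ℝ) ^ n * (2 * √(2 ^ n - 1)) := by
    have : 0 < √((2 : ℝ) ^ n - 1) := Real.sqrt_pos.mpr (by linarith)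
    positivity
  have hratio := (tendsto_pSep_sub_div_sqrt n).div (tendsto_pEnt_sub_div_sqrt n) hden.ne'
  have hlimit : n * (1 / 2) ^ (n - 1) * √(n : ℝ)⁻¹ / (1 / 2 ^ n * (2 * √(2 ^ n - 1)))
      = √((n : ℝ) / (2 ^ n - 1)) := by
    obtain ⟨m, rfl⟩ := Nat.exists_eq_add_of_le' hn
    rw [Real.sqrt_div' _ (by linarith), Real.sqrt_inv, Nat.add_sub_cancel]
    field_simp
    rw [Real.sq_sqrt (by positivity), pow_succ, one_div_pow]
    field_simp
  rw [hlimit] at hratio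
  refine hratio.congr' ?_
  filter_upwards [self_mem_nhdsWithin] with ω hω
  exact div_div_div_cancel_right₀ (Real.sqrt_pos.mpr hω).ne' _ _
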